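/- arXiv:2308.15739 — 4 statements merged into one kernel-verified Lean document; each statement's English description precedes it below -/
import Mathlib

section
/- Let $\mu$ be a locally finite Borel measure on $\mathbb{R}$, let $1 < q < \infty$, and let $M^{\mathcal{D}}_{\mu}$ denote the dyadic maximal operator with respect to $\mu$. Then for every nonnegative locally $\mu$-integrable weight $w$ and every $f \in L^q(M^{\mathcal{D}}_{\mu} w \, d\mu)$, one has $\int_{\mathbb{R}} |M^{\mathcal{D}}_{\mu} f(x)|^q \, w(x) \, d\mu(x) \leq C_q \int_{\mathbb{R}} |f(x)|^q \, M^{\mathcal{D}}_{\mu} w(x) \, d\mu(x)$, where $C_q$ depends only on $q$. -/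
/-!
Stopping at maximal dyadic intervals gives the weighted weak-type bound
`t · (w dμ){M g > t} ≤ ∫ g · M w dμ`: on a maximal interval `I` on which the `μ`-average
of `g` exceeds `t`, one has
`w(I) = μ(I) · avg_I w ≤ μ(I) · inf_I M w ≤ t⁻¹ ∫_I g · M w dμ`, and these intervals are disjoint.
Splitting `f` at height `t / 2` and integrating the weak-type bound against `q t^(q-1) dt`
(layer cake) gives the strong bound with `C_q = 2^q q / (q - 1)`.
-/

open MeasureTheory Set ENNReal

noncomputable def dyadicI (k j : ℤ) : Set ℝ :=
  Set.Ico ((j : ℝ) * (2 : ℝ) ^ (-k)) (((j : ℝ) + 1) * (2 : ℝ) ^ (-k))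

/-- The averages use `ℝ≥0∞` division, so `0 / 0 = 0` and `a / ∞ = 0`. -/
noncomputable def dyadicMax (μ : Measure ℝ) (f : ℝ → ℝ≥0∞) (x : ℝ) : ℝ≥0∞ :=
  ⨆ (k : ℤ) (j : ℤ) (_ : x ∈ dyadicI k j),
    (∫⁻ y in dyadicI k j, f y ∂μ) / μ (dyadicI k j)

lemma measurableSet_dyadicI (k j : ℤ) : MeasurableSet (dyadicI k j) :=
  measurableSet_Ico

lemma mem_dyadicI_iff {k j : ℤ} {x : ℝ} : x ∈ dyadicI k j ↔ ⌊x * 2 ^ k⌋ = j := by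
  have h2k : (0 : ℝ) < 2 ^ k := by positivity
  rw [dyadicI, mem_Ico, Int.floor_eq_iff, zpow_neg, ← div_eq_mul_inv, ← div_eq_mul_inv,
    div_le_iff₀ h2k, lt_div_iff₀ h2k]

lemma floor_mul_two_zpow_eq_div (x : ℝ) (k : ℤ) (n : ℕ) :
    ⌊x * 2 ^ k⌋ = ⌊x * 2 ^ (k + n)⌋ / 2 ^ n := by
  have hx : x * 2 ^ k = x * 2 ^ (k + n) / ((2 ^ n : ℕ) : ℝ) := by
    rw [zpow_add₀ two_ne_zero, zpow_natCast]; push_cast; field_simp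
  rw [hx, Int.floor_div_natCast]
  push_cast; rfl

lemma dyadicI_subset_of_le {k j k' j' : ℤ} {x : ℝ} (hx : x ∈ dyadicI k j)
    (hx' : x ∈ dyadicI k' j') (h : k' ≤ k) : dyadicI k j ⊆ dyadicI k' j' := by
  obtain ⟨n, rfl⟩ : ∃ n : ℕ, k = k' + n := ⟨(k - k').toNat, by omega⟩
  intro y hy
  rw [mem_dyadicI_iff] at hx hx' hy ⊢
  rw [floor_mul_two_zpow_eq_div y k' n, hy, ← hx, ← floor_mul_two_zpow_eq_div, hx']

section Maximal

variable {μ : Measure ℝ}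

lemma le_dyadicMax {f : ℝ → ℝ≥0∞} {k j : ℤ} {x : ℝ} (hx : x ∈ dyadicI k j) :
    (∫⁻ y in dyadicI k j, f y ∂μ) / μ (dyadicI k j) ≤ dyadicMax μ f x :=
  le_iSup₂_of_le k j (le_iSup_of_le hx le_rfl)

lemma lt_dyadicMax_iff {f : ℝ → ℝ≥0∞} {x : ℝ} {t : ℝ≥0∞} :
    t < dyadicMax μ f x ↔ ∃ k j, x ∈ dyadicI k j ∧
      t < (∫⁻ y in dyadicI k j, f y ∂μ) / μ (dyadicI k j) := by
  simp only [dyadicMax, lt_iSup_iff, exists_prop]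

lemma dyadicMax_mono {f g : ℝ → ℝ≥0∞} (h : f ≤ g) : dyadicMax μ f ≤ dyadicMax μ g :=
  fun _ ↦ iSup₂_mono fun _ _ ↦ iSup_mono fun _ ↦ by gcongr; exact h _

lemma dyadicMax_const_le (c : ℝ≥0∞) (x : ℝ) : dyadicMax μ (fun _ ↦ c) x ≤ c := by
  refine iSup₂_le fun k j ↦ iSup_le fun _ ↦ ?_
  rw [setLIntegral_const]
  exact ENNReal.div_le_of_le_mul le_rfl

lemma dyadicMax_add_le {f : ℝ → ℝ≥0∞} (hf : Measurable f) (g : ℝ → ℝ≥0∞)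
    (x : ℝ) : dyadicMax μ (f + g) x ≤ dyadicMax μ f x + dyadicMax μ g x := by
  refine iSup₂_le fun k j ↦ iSup_le fun hx ↦ ?_
  rw [Pi.add_def, lintegral_add_left hf, ENNReal.add_div]
  exact add_le_add (le_dyadicMax hx) (le_dyadicMax hx)

lemma measurable_dyadicMax (f : ℝ → ℝ≥0∞) : Measurable (dyadicMax μ f) := by
  refine .iSup fun k ↦ .iSup fun j ↦ ?_
  set c := (∫⁻ y in dyadicI k j, f y ∂μ) / μ (dyadicI k j)
  convert (measurable_const (a := c)).indicator (measurableSet_dyadicI k j) using 1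
  ext x
  by_cases hx : x ∈ dyadicI k j <;> simp [hx]

end Maximal

lemma exists_pairwiseDisjoint_dyadicI_cover (S : Set (ℤ × ℤ)) (K : ℤ) :
    ∃ T ⊆ S, T.PairwiseDisjoint (fun p ↦ dyadicI p.1 p.2) ∧
      ⋃ p ∈ {p ∈ S | K ≤ p.1}, dyadicI p.1 p.2 ⊆ ⋃ p ∈ T, dyadicI p.1 p.2 := by
  -- the maximal intervals of `S` of scale `≥ K`
  set T : Set (ℤ × ℤ) := {p | p ∈ S ∧ K ≤ p.1 ∧ ∀ k' j', K ≤ k' → k' < p.1 →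
    dyadicI p.1 p.2 ⊆ dyadicI k' j' → (k', j') ∉ S}
  refine ⟨T, fun p hp ↦ hp.1, ?disjoint, ?cover⟩
  case disjoint =>
    rintro p hp p' hp' hne
    refine Set.disjoint_left.mpr fun x hx hx' ↦ ?_
    rcases lt_trichotomy p.1 p'.1 with h | h | h
    · exact hp'.2.2 p.1 p.2 hp.2.1 h (dyadicI_subset_of_le hx' hx h.le) hp.1
    · rw [mem_dyadicI_iff] at hx hx'
      exact hne (Prod.ext h (by rw [← hx, ← hx', h]))
    · exact hp.2.2 p'.1 p'.2 hp'.2.1 h (dyadicI_subset_of_le hx hx' h.le) hp'.1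
  case cover =>
    intro x hx
    obtain ⟨⟨k, j⟩, ⟨hS, hK⟩, hx⟩ := mem_iUnion₂.mp hx
    rw [mem_dyadicI_iff] at hx
    obtain ⟨k₀, ⟨hK₀, hS₀⟩, hmin⟩ := Int.exists_least_of_bdd
      (P := fun k' ↦ K ≤ k' ∧ (k', ⌊x * 2 ^ k'⌋) ∈ S) ⟨K, fun _ h ↦ h.1⟩
      ⟨k, hK, hx ▸ hS⟩
    refine mem_iUnion₂.mpr ⟨(k₀, ⌊x * 2 ^ k₀⌋),
      ⟨hS₀, hK₀, fun k' j' hk' hlt hsub hS' ↦ ?_⟩, mem_dyadicI_iff.mpr rfl⟩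
    have hj' := mem_dyadicI_iff.mp (hsub (mem_dyadicI_iff.mpr rfl))
    exact (hmin k' ⟨hk', hj' ▸ hS'⟩).not_gt hlt

section WeakType

variable {μ : Measure ℝ} {w g : ℝ → ℝ≥0∞} {t : ℝ≥0∞}

lemma mul_withDensity_dyadicI_le (hg : Measurable g) {k j : ℤ}
    (ht : t < (∫⁻ y in dyadicI k j, g y ∂μ) / μ (dyadicI k j)) :
    t * μ.withDensity w (dyadicI k j) ≤
      ∫⁻ x in dyadicI k j, g x * dyadicMax μ w x ∂μ := by
  set I := dyadicI k j
  obtain ⟨hg0, hItop⟩ := ENNReal.div_pos_iff.mp (pos_of_gt ht)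
  have hI0 : μ I ≠ 0 := fun h ↦ hg0 (setLIntegral_measure_zero _ _ h)
  set W := ∫⁻ y in I, w y ∂μ
  calc t * μ.withDensity w I = W / μ I * (t * μ I) := by
        rw [withDensity_apply _ (measurableSet_dyadicI k j), mul_left_comm,
          ENNReal.div_mul_cancel hI0 hItop]
    _ ≤ W / μ I * ∫⁻ y in I, g y ∂μ := by gcongr; exact ENNReal.mul_le_of_le_div ht.le
    _ = ∫⁻ x in I, g x * (W / μ I) ∂μ := by rw [lintegral_mul_const _ hg, mul_comm]
    _ ≤ ∫⁻ x in I, g x * dyadicMax μ w x ∂μ :=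
        setLIntegral_mono (hg.mul (measurable_dyadicMax w)) fun x hx ↦ by
          gcongr; exact le_dyadicMax hx

lemma mul_withDensity_biUnion_dyadicI_le (hg : Measurable g) {T : Set (ℤ × ℤ)}
    (hT : ∀ p ∈ T, t < (∫⁻ y in dyadicI p.1 p.2, g y ∂μ) / μ (dyadicI p.1 p.2))
    (hd : T.PairwiseDisjoint (fun p ↦ dyadicI p.1 p.2)) :
    t * μ.withDensity w (⋃ p ∈ T, dyadicI p.1 p.2) ≤
      ∫⁻ x, g x * dyadicMax μ w x ∂μ := by
  have hmeas : ∀ p ∈ T, MeasurableSet (dyadicI p.1 p.2) := fun _ _ ↦ measurableSet_dyadicI _ _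
  calc t * μ.withDensity w (⋃ p ∈ T, dyadicI p.1 p.2)
      = ∑' p : T, t * μ.withDensity w (dyadicI p.1.1 p.1.2) := by
        rw [measure_biUnion T.to_countable hd hmeas, ENNReal.tsum_mul_left]
    _ ≤ ∑' p : T, ∫⁻ x in dyadicI p.1.1 p.1.2, g x * dyadicMax μ w x ∂μ :=
        ENNReal.tsum_le_tsum fun p ↦ mul_withDensity_dyadicI_le hg (hT p p.2)
    _ = ∫⁻ x in ⋃ p ∈ T, dyadicI p.1 p.2, g x * dyadicMax μ w x ∂μ :=
        (lintegral_biUnion T.to_countable hmeas hd _).symm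
    _ ≤ ∫⁻ x, g x * dyadicMax μ w x ∂μ := setLIntegral_le_lintegral _ _

lemma mul_withDensity_lt_dyadicMax_le (hg : Measurable g) :
    t * μ.withDensity w {x | t < dyadicMax μ g x} ≤ ∫⁻ x, g x * dyadicMax μ w x ∂μ := by
  set S := {p : ℤ × ℤ | t < (∫⁻ y in dyadicI p.1 p.2, g y ∂μ) / μ (dyadicI p.1 p.2)}
  set U : ℤ → Set ℝ := fun K ↦ ⋃ p ∈ {p ∈ S | K ≤ p.1}, dyadicI p.1 p.2
  have hU : {x | t < dyadicMax μ g x} = ⋃ K, U K := by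
    ext x
    simp only [mem_ofPred_eq, lt_dyadicMax_iff, mem_iUnion, U, S, exists_prop]
    exact ⟨fun ⟨k, j, hx, ht⟩ ↦ ⟨k, (k, j), ⟨ht, le_rfl⟩, hx⟩,
      fun ⟨_, p, ⟨ht, _⟩, hx⟩ ↦ ⟨p.1, p.2, hx, ht⟩⟩
  have hU_anti : Antitone U := fun K K' hK ↦
    biUnion_subset_biUnion_left fun p hp ↦ ⟨hp.1, hK.trans hp.2⟩
  rw [hU, hU_anti.measure_iUnion, ENNReal.mul_iSup]
  refine iSup_le fun K ↦ ?_
  obtain ⟨T, hTS, hTd, hcover⟩ := exists_pairwiseDisjoint_dyadicI_cover S K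
  calc t * μ.withDensity w (U K) ≤ t * μ.withDensity w (⋃ p ∈ T, dyadicI p.1 p.2) := by
        gcongr
    _ ≤ _ := mul_withDensity_biUnion_dyadicI_le hg (fun p hp ↦ hTS hp) hTd

end WeakType

section LayerCake

variable {p : ℝ}

lemma ofReal_mul_lintegral_Ioo_rpow_sub_one (hp : 0 < p) {b : ℝ} (hb : 0 ≤ b) :
    ENNReal.ofReal p * ∫⁻ t in Ioo 0 b, ENNReal.ofReal (t ^ (p - 1)) =
      ENNReal.ofReal (b ^ p) := by
  have hint : IntegrableOn (fun t : ℝ ↦ t ^ (p - 1)) (Ioo 0 b) :=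
    (intervalIntegral.intervalIntegrable_rpow' (by linarith)).1.mono_set Ioo_subset_Ioc_self
  have hnn : 0 ≤ᵐ[volume.restrict (Ioo 0 b)] fun t : ℝ ↦ t ^ (p - 1) :=
    (ae_restrict_mem measurableSet_Ioo).mono fun t ht ↦ Real.rpow_nonneg ht.1.le _
  rw [← ofReal_integral_eq_lintegral_ofReal hint hnn, ← ENNReal.ofReal_mul hp.le,
    ← integral_Ioc_eq_integral_Ioo, ← intervalIntegral.integral_of_le hb,
    integral_rpow (Or.inl (by linarith)), sub_add_cancel, Real.zero_rpow hp.ne', sub_zero,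
    mul_div_cancel₀ _ hp.ne']

lemma ofReal_mul_lintegral_indicator_rpow_sub_one (hp : 0 < p) (a : ℝ≥0∞) :
    ENNReal.ofReal p * ∫⁻ t in Ioi 0,
      {t | ENNReal.ofReal t < a}.indicator (fun t ↦ ENNReal.ofReal (t ^ (p - 1))) t = a ^ p := by
  rw [lintegral_indicator (measurableSet_lt ENNReal.measurable_ofReal measurable_const),
    Measure.restrict_restrict (measurableSet_lt ENNReal.measurable_ofReal measurable_const)]
  rcases eq_or_ne a ⊤ with rfl | ha
  · rw [ENNReal.top_rpow_of_pos hp]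
    refine ENNReal.eq_top_of_forall_nnreal_le fun r ↦ ?_
    -- the integral over `(0, b)` with `b ^ p = r` is already `r`
    calc (r : ℝ≥0∞) = ENNReal.ofReal (((r : ℝ) ^ p⁻¹) ^ p) := by
          rw [Real.rpow_inv_rpow r.coe_nonneg hp.ne', ENNReal.ofReal_coe_nnreal]
      _ = ENNReal.ofReal p * ∫⁻ t in Ioo 0 ((r : ℝ) ^ p⁻¹), ENNReal.ofReal (t ^ (p - 1)) :=
          (ofReal_mul_lintegral_Ioo_rpow_sub_one hp (by positivity)).symm
      _ ≤ _ := by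
          gcongr
          exact fun t ht ↦ ⟨ENNReal.ofReal_lt_top, ht.1⟩
  · have hset : {t | ENNReal.ofReal t < a} ∩ Ioi 0 = Ioo 0 a.toReal := by
      ext t
      simp only [mem_inter_iff, mem_ofPred_eq, mem_Ioi, mem_Ioo]
      exact ⟨fun h ↦ ⟨h.2, (ENNReal.ofReal_lt_iff_lt_toReal h.2.le ha).mp h.1⟩,
        fun h ↦ ⟨(ENNReal.ofReal_lt_iff_lt_toReal h.1.le ha).mpr h.2, h.1⟩⟩
    rw [hset, ofReal_mul_lintegral_Ioo_rpow_sub_one hp ENNReal.toReal_nonneg,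
      ← ENNReal.ofReal_rpow_of_nonneg ENNReal.toReal_nonneg hp.le, ENNReal.ofReal_toReal ha]

lemma lintegral_rpow_eq_ofReal_mul_lintegral_meas_lt {α : Type*} [MeasurableSpace α]
    (ν : Measure α) [SFinite ν] {G : α → ℝ≥0∞} (hG : Measurable G) (hp : 0 < p) :
    ∫⁻ x, G x ^ p ∂ν =
      ENNReal.ofReal p *
        ∫⁻ t in Ioi 0, ν {x | ENNReal.ofReal t < G x} * ENNReal.ofReal (t ^ (p - 1)) := by
  have hφ : Measurable fun t : ℝ ↦ ENNReal.ofReal (t ^ (p - 1)) :=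
    (measurable_id.pow_const _).ennreal_ofReal
  have hmeas : Measurable (Function.uncurry fun x t ↦
      {t | ENNReal.ofReal t < G x}.indicator (fun t ↦ ENNReal.ofReal (t ^ (p - 1))) t) :=
    (hφ.comp measurable_snd).indicator
      (measurableSet_lt (ENNReal.measurable_ofReal.comp measurable_snd) (hG.comp measurable_fst))
  simp_rw [← ofReal_mul_lintegral_indicator_rpow_sub_one hp (G _)]
  rw [lintegral_const_mul _ hmeas.lintegral_prod_right,
    lintegral_lintegral_swap hmeas.aemeasurable]
  congr 1
  refine lintegral_congr fun t ↦ ?_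
  rw [mul_comm, ← lintegral_indicator_const (measurableSet_lt measurable_const hG)]
  rfl

end LayerCake

lemma lintegral_const_mul_rpow_withDensity_mul {α : Type*} [MeasurableSpace α] {μ : Measure α}
    {F G : α → ℝ≥0∞} (hF : Measurable F) (hG : Measurable G) {p : ℝ} (hp : 0 ≤ p)
    (c : ℝ≥0∞) :
    ∫⁻ x, (c * F x) ^ p ∂μ.withDensity (fun x ↦ F x * G x) =
      c ^ p * ∫⁻ x, F x ^ (p + 1) * G x ∂μ := by
  rw [lintegral_withDensity_eq_lintegral_mul _ (f := fun x ↦ F x * G x) (hF.mul hG)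
    ((hF.const_mul c).pow_const _), ← lintegral_const_mul _ (by fun_prop)]
  refine lintegral_congr fun x ↦ ?_
  rw [Pi.mul_apply, ENNReal.mul_rpow_of_nonneg _ _ hp,
    ENNReal.rpow_add_of_nonneg _ _ hp zero_le_one, ENNReal.rpow_one]
  ring

section StrongType

variable {μ : Measure ℝ} {w F : ℝ → ℝ≥0∞}

lemma mul_withDensity_lt_dyadicMax_le_two_mul (hF : Measurable F) (t : ℝ≥0∞) :
    t * μ.withDensity w {x | t < dyadicMax μ F x} ≤
      2 * μ.withDensity (fun x ↦ F x * dyadicMax μ w x) {x | t < 2 * F x} := by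
  have hlarge : MeasurableSet {x | t < 2 * F x} :=
    measurableSet_lt measurable_const (hF.const_mul 2)
  set F₁ := {x | t < 2 * F x}.indicator F
  have hF₁ : Measurable F₁ := hF.indicator hlarge
  have hF_le : F ≤ F₁ + fun _ ↦ t / 2 := fun y ↦ by
    by_cases h : t < 2 * F y
    · simp [F₁, h]
    · rw [Pi.add_apply, show F₁ y = 0 from indicator_of_notMem (s := {x | t < 2 * F x}) h F,
        zero_add, ENNReal.le_div_iff_mul_le (.inl two_ne_zero) (.inl ofNat_ne_top), mul_comm]
      exact not_lt.mp h
  have hsub : {x | t < dyadicMax μ F x} ⊆ {x | t / 2 < dyadicMax μ F₁ x} := fun x hx ↦ by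
    refine show t / 2 < dyadicMax μ F₁ x from
      not_le.mp fun h ↦ (lt_irrefl t) (hx.trans_le ?_)
    calc dyadicMax μ F x ≤ dyadicMax μ F₁ x + dyadicMax μ (fun _ ↦ t / 2) x :=
          (dyadicMax_mono hF_le x).trans (dyadicMax_add_le hF₁ _ x)
      _ ≤ t / 2 + t / 2 := add_le_add h (dyadicMax_const_le _ x)
      _ = t := ENNReal.add_halves t
  calc t * μ.withDensity w {x | t < dyadicMax μ F x}
      = 2 * (t / 2 * μ.withDensity w {x | t < dyadicMax μ F x}) := by
        rw [← mul_assoc, ENNReal.mul_div_cancel two_ne_zero ofNat_ne_top]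
    _ ≤ 2 * (t / 2 * μ.withDensity w {x | t / 2 < dyadicMax μ F₁ x}) := by gcongr
    _ ≤ 2 * ∫⁻ x, F₁ x * dyadicMax μ w x ∂μ := by
        gcongr; exact mul_withDensity_lt_dyadicMax_le hF₁
    _ = 2 * μ.withDensity (fun x ↦ F x * dyadicMax μ w x) {x | t < 2 * F x} := by
        rw [withDensity_apply _ hlarge, ← lintegral_indicator hlarge]
        simp_rw [F₁, indicator_mul_left]

lemma withDensity_lt_dyadicMax_mul_rpow_le (hF : Measurable F) {t : ℝ} (ht : 0 < t) (r : ℝ) :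
    μ.withDensity w {x | ENNReal.ofReal t < dyadicMax μ F x} * ENNReal.ofReal (t ^ r) ≤
      2 * (μ.withDensity (fun x ↦ F x * dyadicMax μ w x) {x | ENNReal.ofReal t < 2 * F x} *
        ENNReal.ofReal (t ^ (r - 1))) := by
  have hpow : t ^ r = t * t ^ (r - 1) := by
    rw [Real.rpow_sub_one ht.ne', mul_div_cancel₀ _ ht.ne']
  rw [hpow, ENNReal.ofReal_mul ht.le, ← mul_assoc, mul_comm _ (ENNReal.ofReal t), ← mul_assoc]
  gcongr ?_ * _
  exact mul_withDensity_lt_dyadicMax_le_two_mul hF _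

theorem lintegral_dyadicMax_rpow_mul_le {q : ℝ} (hq : 1 < q) [SFinite μ] (hw : Measurable w)
    (hF : Measurable F) :
    ∫⁻ x, dyadicMax μ F x ^ q * w x ∂μ ≤
      2 ^ q * ENNReal.ofReal (q / (q - 1)) * ∫⁻ x, F x ^ q * dyadicMax μ w x ∂μ := by
  set ν := μ.withDensity w
  set ρ := μ.withDensity fun x ↦ F x * dyadicMax μ w x
  have hq₁ : 0 < q - 1 := by linarith
  calc ∫⁻ x, dyadicMax μ F x ^ q * w x ∂μ = ∫⁻ x, dyadicMax μ F x ^ q ∂ν := by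
        rw [lintegral_withDensity_eq_lintegral_mul _ hw ((measurable_dyadicMax F).pow_const q)]
        simp_rw [Pi.mul_apply, mul_comm]
    _ = ENNReal.ofReal q * ∫⁻ t in Ioi 0,
          ν {x | ENNReal.ofReal t < dyadicMax μ F x} * ENNReal.ofReal (t ^ (q - 1)) :=
        lintegral_rpow_eq_ofReal_mul_lintegral_meas_lt _ (measurable_dyadicMax F) (by linarith)
    _ ≤ ENNReal.ofReal q * (2 * ∫⁻ t in Ioi 0,
          ρ {x | ENNReal.ofReal t < 2 * F x} * ENNReal.ofReal (t ^ (q - 1 - 1))) := by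
        rw [← lintegral_const_mul' _ _ ofNat_ne_top]
        gcongr ENNReal.ofReal q * ?_
        exact setLIntegral_mono' measurableSet_Ioi fun t ht ↦
          withDensity_lt_dyadicMax_mul_rpow_le hF ht _
    _ = ENNReal.ofReal q *
          (2 * ((ENNReal.ofReal (q - 1))⁻¹ * ∫⁻ x, (2 * F x) ^ (q - 1) ∂ρ)) := by
        rw [lintegral_rpow_eq_ofReal_mul_lintegral_meas_lt ρ (hF.const_mul 2) hq₁,
          ENNReal.inv_mul_cancel_left (by simpa using hq₁) ofReal_ne_top]
    _ = 2 ^ q * ENNReal.ofReal (q / (q - 1)) * ∫⁻ x, F x ^ q * dyadicMax μ w x ∂μ := by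
        rw [lintegral_const_mul_rpow_withDensity_mul hF (measurable_dyadicMax w) hq₁.le,
          sub_add_cancel, ENNReal.ofReal_div_of_pos hq₁, div_eq_mul_inv,
          show q = 1 + (q - 1) by ring, ENNReal.rpow_add _ _ two_ne_zero ofNat_ne_top,
          ENNReal.rpow_one, add_sub_cancel_left]
        ring

end StrongType

/-- Fefferman–Stein type inequality for the dyadic maximal operator:
`∫ |M_μ f|^q w dμ ≤ C_q ∫ |f|^q (M_μ w) dμ` with `C_q` depending only on `q`. -/
theorem stmt0 (q : ℝ) (hq : 1 < q) :
    ∃ C : ℝ≥0∞, 0 < C ∧ C < ∞ ∧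
      ∀ (μ : Measure ℝ) [IsLocallyFiniteMeasure μ] (w : ℝ → ℝ≥0∞) (f : ℝ → ℝ),
        Measurable w → Measurable f →
        (∫⁻ x, ((‖f x‖₊ : ℝ≥0∞) ^ q) * dyadicMax μ w x ∂μ) < ∞ →
        (∫⁻ x, (dyadicMax μ (fun y => (‖f y‖₊ : ℝ≥0∞)) x) ^ q * w x ∂μ)
          ≤ C * ∫⁻ x, ((‖f x‖₊ : ℝ≥0∞) ^ q) * dyadicMax μ w x ∂μ := by
  refine ⟨2 ^ q * ENNReal.ofReal (q / (q - 1)), ?_, ?_, ?_⟩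
  · exact ENNReal.mul_pos (by positivity)
      (ENNReal.ofReal_pos.mpr (div_pos (by linarith) (by linarith))).ne'
  · exact ENNReal.mul_lt_top (ENNReal.rpow_lt_top_of_nonneg (by linarith) ofNat_ne_top)
      ofReal_lt_top
  · intro μ _ w f hw hf _
    exact lintegral_dyadicMax_rpow_mul_le hq hw hf.nnnorm.coe_nnreal_ennreal
end

section
/- Let $1 < p < \infty$, let $\sigma, \omega$ be locally finite Borel measures on $\mathbb{R}^n$, and let $T$ be a Calderón–Zygmund operator with kernel $K$ satisfying $|K(x,y)| \leq C_{CZ} |x-y|^{-n}$. Then the full testing constant is controlled by the triple testing constant plus the two-tailed Muckenhoupt characteristic: $\mathfrak{FT}_{T,p}(\sigma, \omega) \lesssim \mathcal{A}_p(\sigma, \omega) + \mathfrak{TR}_{T,p}(\sigma, \omega)$. -/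
open MeasureTheory Set ENNReal

/-- The axis-parallel half-open cube with corner `a` and sidelength `l`. -/
def cubeSet {n : ℕ} (a : Fin n → ℝ) (l : ℝ) : Set (Fin n → ℝ) :=
  {x | ∀ i, x i ∈ Set.Ico (a i) (a i + l)}

/-- The concentric triple `3Q` of the cube with corner `a` and sidelength `l`. -/
def tripleCube {n : ℕ} (a : Fin n → ℝ) (l : ℝ) : Set (Fin n → ℝ) :=
  cubeSet (fun i => a i - l) (3 * l)

/-- `T_σ 1_Q (x) = ∫_Q K(x,y) dσ(y)`. -/
noncomputable def Tcube {n : ℕ} (K : (Fin n → ℝ) → (Fin n → ℝ) → ℝ)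
    (σ : Measure (Fin n → ℝ)) (a : Fin n → ℝ) (l : ℝ) (x : Fin n → ℝ) : ℝ :=
  ∫ y in cubeSet a l, K x y ∂σ

/-- The full testing characteristic `𝔉𝔗_{T,p}(σ,ω)`. -/
noncomputable def fullTesting {n : ℕ} (K : (Fin n → ℝ) → (Fin n → ℝ) → ℝ)
    (p : ℝ) (σ ω : Measure (Fin n → ℝ)) : ℝ≥0∞ :=
  (⨆ (a : Fin n → ℝ) (l : ℝ) (_ : 0 < l),
    (∫⁻ x, ((‖Tcube K σ a l x‖₊ : ℝ≥0∞)) ^ p ∂ω) / σ (cubeSet a l)) ^ (1 / p)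

/-- The triple testing characteristic `𝔗ℜ_{T,p}(σ,ω)`. -/
noncomputable def tripleTesting {n : ℕ} (K : (Fin n → ℝ) → (Fin n → ℝ) → ℝ)
    (p : ℝ) (σ ω : Measure (Fin n → ℝ)) : ℝ≥0∞ :=
  (⨆ (a : Fin n → ℝ) (l : ℝ) (_ : 0 < l),
    (∫⁻ x in tripleCube a l, ((‖Tcube K σ a l x‖₊ : ℝ≥0∞)) ^ p ∂ω) / σ (cubeSet a l)) ^ (1 / p)

/-- The two-tailed Muckenhoupt characteristic `𝒜_p(σ,ω)`. -/
noncomputable def tailedAp (n : ℕ) (p p' : ℝ) (σ ω : Measure (Fin n → ℝ)) : ℝ≥0∞ :=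
  ⨆ (a : Fin n → ℝ) (l : ℝ) (_ : 0 < l),
    ((ENNReal.ofReal (l ^ n))⁻¹ *
      ∫⁻ x, ENNReal.ofReal ((l ^ n / (l + Metric.infDist x (cubeSet a l)) ^ n) ^ p) ∂ω) ^ (1 / p) *
    ((ENNReal.ofReal (l ^ n))⁻¹ *
      ∫⁻ x, ENNReal.ofReal ((l ^ n / (l + Metric.infDist x (cubeSet a l)) ^ n) ^ p') ∂σ) ^ (1 / p')

/-!
Split `∫ |T_σ 1_Q|^p dω` over `3Q` and its complement; the part over `3Q` is triple testing.
For `x ∉ 3Q` and `y ∈ Q` one has `|x - y| ≥ (ℓ(Q) + dist(x, Q)) / 2`, so the size bound on `K`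
gives `|T_σ 1_Q(x)| ≤ 2ⁿ C_CZ σ(Q) |Q|⁻¹ w_Q(x)` with `w_Q(x) = |Q| / (ℓ(Q) + dist(x, Q))ⁿ`.
Hence the tail is at most `(2ⁿ C_CZ)^p |Q|^{-p} σ(Q)^p ∫ w_Q^p dω`, and since `w_Q = 1` on `Q`,
`σ(Q) ≤ ∫ w_Q^{p'} dσ`, which turns this into `(2ⁿ C_CZ 𝒜_p)^p σ(Q)`.
-/

variable {n : ℕ}

lemma cubeSet_eq_pi (a : Fin n → ℝ) (l : ℝ) :
    cubeSet a l = Set.univ.pi fun i => Ico (a i) (a i + l) := by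
  ext x
  simp [cubeSet]

lemma measurableSet_cubeSet (a : Fin n → ℝ) (l : ℝ) : MeasurableSet (cubeSet a l) := by
  rw [cubeSet_eq_pi]
  exact MeasurableSet.univ_pi fun _ => measurableSet_Ico

lemma cubeSet_subset_closedBall (a : Fin n → ℝ) {l : ℝ} (hl : 0 ≤ l) :
    cubeSet a l ⊆ Metric.closedBall a l := by
  intro x hx
  rw [Metric.mem_closedBall, dist_pi_le_iff hl]
  intro i
  rw [Real.dist_eq, abs_le]
  exact ⟨by linarith [(hx i).1], by linarith [(hx i).2]⟩

lemma measure_cubeSet_lt_top (μ : Measure (Fin n → ℝ)) [IsLocallyFiniteMeasure μ]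
    (a : Fin n → ℝ) {l : ℝ} (hl : 0 ≤ l) : μ (cubeSet a l) < ∞ :=
  (measure_mono (cubeSet_subset_closedBall a hl)).trans_lt measure_closedBall_lt_top

lemma le_dist_of_notMem_tripleCube {a : Fin n → ℝ} {l : ℝ} {x y : Fin n → ℝ}
    (hx : x ∉ tripleCube a l) (hy : y ∈ cubeSet a l) : l ≤ dist x y := by
  simp only [tripleCube, cubeSet, mem_ofPred_eq, mem_Ico, not_forall, not_and_or, not_le,
    not_lt] at hx hy
  obtain ⟨i, hi⟩ := hx
  calc l ≤ |x i - y i| := by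
        rw [le_abs]
        rcases hi with hi | hi
        · right; linarith [(hy i).1]
        · left; linarith [(hy i).2]
    _ = dist (x i) (y i) := (Real.dist_eq _ _).symm
    _ ≤ dist x y := dist_le_pi_dist x y i

lemma add_infDist_le_two_mul_dist {a : Fin n → ℝ} {l : ℝ} {x y : Fin n → ℝ}
    (hx : x ∉ tripleCube a l) (hy : y ∈ cubeSet a l) :
    l + Metric.infDist x (cubeSet a l) ≤ 2 * dist x y := by
  linarith [le_dist_of_notMem_tripleCube hx hy, Metric.infDist_le_dist_of_mem (x := x) hy]

noncomputable def tailWeight (a : Fin n → ℝ) (l : ℝ) (x : Fin n → ℝ) : ℝ :=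
  l ^ n / (l + Metric.infDist x (cubeSet a l)) ^ n

lemma tailWeight_nonneg (a : Fin n → ℝ) {l : ℝ} (hl : 0 ≤ l) (x : Fin n → ℝ) :
    0 ≤ tailWeight a l x := by
  unfold tailWeight
  have := Metric.infDist_nonneg (x := x) (s := cubeSet a l)
  positivity

lemma tailWeight_of_mem {a : Fin n → ℝ} {l : ℝ} (hl : 0 < l) {x : Fin n → ℝ}
    (hx : x ∈ cubeSet a l) : tailWeight a l x = 1 := by
  rw [tailWeight, Metric.infDist_zero_of_mem hx, add_zero, div_self (pow_pos hl n).ne']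

lemma abs_le_tailWeight_of_notMem_tripleCube {K : (Fin n → ℝ) → (Fin n → ℝ) → ℝ} {CCZ : ℝ}
    (hCCZ : 0 ≤ CCZ) (hK : ∀ x y, x ≠ y → |K x y| ≤ CCZ / dist x y ^ n)
    {a : Fin n → ℝ} {l : ℝ} (hl : 0 < l) {x y : Fin n → ℝ}
    (hx : x ∉ tripleCube a l) (hy : y ∈ cubeSet a l) :
    |K x y| ≤ 2 ^ n * CCZ / l ^ n * tailWeight a l x := by
  have hd := Metric.infDist_nonneg (x := x) (s := cubeSet a l)
  have hxy : x ≠ y := by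
    rintro rfl
    linarith [le_dist_of_notMem_tripleCube hx hy, dist_self x]
  have hhalf : (l + Metric.infDist x (cubeSet a l)) / 2 ≤ dist x y := by
    linarith [add_infDist_le_two_mul_dist hx hy]
  calc |K x y| ≤ CCZ / dist x y ^ n := hK x y hxy
    _ ≤ CCZ / ((l + Metric.infDist x (cubeSet a l)) / 2) ^ n := by gcongr
    _ = 2 ^ n * CCZ / l ^ n * tailWeight a l x := by
      rw [tailWeight, div_pow]
      field_simp

lemma enorm_Tcube_le_of_notMem_tripleCube {K : (Fin n → ℝ) → (Fin n → ℝ) → ℝ} {CCZ : ℝ}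
    (hCCZ : 0 ≤ CCZ) (hK : ∀ x y, x ≠ y → |K x y| ≤ CCZ / dist x y ^ n)
    (σ : Measure (Fin n → ℝ)) {a : Fin n → ℝ} {l : ℝ} (hl : 0 < l) {x : Fin n → ℝ}
    (hx : x ∉ tripleCube a l) :
    ‖Tcube K σ a l x‖ₑ ≤
      ENNReal.ofReal (2 ^ n * CCZ / l ^ n * tailWeight a l x) * σ (cubeSet a l) :=
  calc ‖Tcube K σ a l x‖ₑ ≤ ∫⁻ y in cubeSet a l, ‖K x y‖ₑ ∂σ :=
        enorm_integral_le_lintegral_enorm _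
    _ ≤ ∫⁻ _ in cubeSet a l, ENNReal.ofReal (2 ^ n * CCZ / l ^ n * tailWeight a l x) ∂σ :=
        setLIntegral_mono' (measurableSet_cubeSet a l) fun y hy => by
          rw [Real.enorm_eq_ofReal_abs]
          exact ENNReal.ofReal_le_ofReal
            (abs_le_tailWeight_of_notMem_tripleCube hCCZ hK hl hx hy)
    _ = _ := setLIntegral_const _ _

lemma rpow_one_div_mul_rpow_one_div_rpow {p q : ℝ} (hpq : p.HolderConjugate q) (A B : ℝ≥0∞) :
    (A ^ (1 / p) * B ^ (1 / q)) ^ p = A * B ^ (p - 1) := by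
  rw [mul_rpow_of_nonneg _ _ hpq.nonneg, ← rpow_mul, ← rpow_mul, one_div_mul_cancel hpq.ne_zero,
    rpow_one, one_div_mul_eq_div, hpq.div_conj_eq_sub_one]

lemma measure_cubeSet_le_lintegral_tailWeight_rpow (σ : Measure (Fin n → ℝ)) (a : Fin n → ℝ)
    {l : ℝ} (hl : 0 < l) (q : ℝ) :
    σ (cubeSet a l) ≤ ∫⁻ x, ENNReal.ofReal (tailWeight a l x ^ q) ∂σ :=
  calc σ (cubeSet a l) = ∫⁻ x in cubeSet a l, ENNReal.ofReal (tailWeight a l x ^ q) ∂σ := by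
        rw [setLIntegral_congr_fun (measurableSet_cubeSet a l) fun x hx => by
          rw [tailWeight_of_mem hl hx, Real.one_rpow, ENNReal.ofReal_one], setLIntegral_one]
    _ ≤ _ := setLIntegral_le_lintegral _ _

lemma inv_rpow_mul_measure_rpow_mul_le_tailedAp_rpow {p p' : ℝ} (hpq : p.HolderConjugate p')
    (σ ω : Measure (Fin n → ℝ)) (a : Fin n → ℝ) {l : ℝ} (hl : 0 < l) :
    (ENNReal.ofReal (l ^ n))⁻¹ ^ p * σ (cubeSet a l) ^ (p - 1) *
        ∫⁻ x, ENNReal.ofReal (tailWeight a l x ^ p) ∂ω ≤ tailedAp n p p' σ ω ^ p := by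
  set L := (ENNReal.ofReal (l ^ n))⁻¹
  set Iω := ∫⁻ x, ENNReal.ofReal (tailWeight a l x ^ p) ∂ω
  set Iσ := ∫⁻ x, ENNReal.ofReal (tailWeight a l x ^ p') ∂σ
  have hcube : (L * Iω) ^ (1 / p) * (L * Iσ) ^ (1 / p') ≤ tailedAp n p p' σ ω :=
    le_iSup_of_le a (le_iSup_of_le l (le_iSup_of_le hl le_rfl))
  calc L ^ p * σ (cubeSet a l) ^ (p - 1) * Iω = L * Iω * (L * σ (cubeSet a l)) ^ (p - 1) := by
        rw [mul_rpow_of_nonneg _ _ hpq.sub_one_pos.le]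
        nth_rewrite 1 [← add_sub_cancel 1 p]
        rw [rpow_add_of_nonneg 1 (p - 1) zero_le_one hpq.sub_one_pos.le, rpow_one]
        ring
    _ ≤ L * Iω * (L * Iσ) ^ (p - 1) := by
        gcongr
        · exact hpq.sub_one_pos.le
        · exact measure_cubeSet_le_lintegral_tailWeight_rpow σ a hl p'
    _ = ((L * Iω) ^ (1 / p) * (L * Iσ) ^ (1 / p')) ^ p :=
        (rpow_one_div_mul_rpow_one_div_rpow hpq _ _).symm
    _ ≤ tailedAp n p p' σ ω ^ p := rpow_le_rpow hcube hpq.nonneg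

section Testing

variable {K : (Fin n → ℝ) → (Fin n → ℝ) → ℝ} {p p' CCZ : ℝ}

lemma setLIntegral_tripleCube_div_le_tripleTesting_rpow (hp : 0 < p) (σ ω : Measure (Fin n → ℝ))
    (a : Fin n → ℝ) {l : ℝ} (hl : 0 < l) :
    (∫⁻ x in tripleCube a l, (‖Tcube K σ a l x‖₊ : ℝ≥0∞) ^ p ∂ω) / σ (cubeSet a l) ≤
      tripleTesting K p σ ω ^ p := by
  rw [tripleTesting, ← rpow_mul, one_div_mul_cancel hp.ne', rpow_one]
  exact le_iSup_of_le a (le_iSup_of_le l (le_iSup_of_le hl le_rfl))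

lemma setLIntegral_compl_tripleCube_div_le (hpq : p.HolderConjugate p') (hCCZ : 0 ≤ CCZ)
    (hK : ∀ x y, x ≠ y → |K x y| ≤ CCZ / dist x y ^ n)
    (σ ω : Measure (Fin n → ℝ)) [IsLocallyFiniteMeasure σ] (a : Fin n → ℝ) {l : ℝ} (hl : 0 < l)
    (hσ : σ (cubeSet a l) ≠ 0) :
    (∫⁻ x in (tripleCube a l)ᶜ, (‖Tcube K σ a l x‖₊ : ℝ≥0∞) ^ p ∂ω) / σ (cubeSet a l) ≤
      (ENNReal.ofReal (2 ^ n * CCZ) * tailedAp n p p' σ ω) ^ p := by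
  set c := ENNReal.ofReal (2 ^ n * CCZ)
  set L := (ENNReal.ofReal (l ^ n))⁻¹
  set σQ := σ (cubeSet a l)
  have hσQ : σQ ≠ ∞ := (measure_cubeSet_lt_top σ a hl.le).ne
  have hconst : (c * L * σQ) ^ p ≠ ∞ := by
    have : L ≠ ∞ := inv_ne_top.mpr (ofReal_pos.mpr (pow_pos hl n)).ne'
    exact (rpow_lt_top_of_nonneg hpq.nonneg (by finiteness)).ne
  have hpointwise : ∀ x ∈ (tripleCube a l)ᶜ, (‖Tcube K σ a l x‖₊ : ℝ≥0∞) ^ p ≤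
      (c * L * σQ) ^ p * ENNReal.ofReal (tailWeight a l x ^ p) := by
    intro x hx
    have hw := tailWeight_nonneg a hl.le x
    have hsplit : ENNReal.ofReal (2 ^ n * CCZ / l ^ n * tailWeight a l x) =
        c * L * ENNReal.ofReal (tailWeight a l x) := by
      rw [ofReal_mul (by positivity), ofReal_div_of_pos (pow_pos hl n), div_eq_mul_inv]
    calc (‖Tcube K σ a l x‖₊ : ℝ≥0∞) ^ p
        ≤ (ENNReal.ofReal (2 ^ n * CCZ / l ^ n * tailWeight a l x) * σQ) ^ p :=
          rpow_le_rpow (enorm_Tcube_le_of_notMem_tripleCube hCCZ hK σ hl hx) hpq.nonneg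
      _ = (c * L * σQ * ENNReal.ofReal (tailWeight a l x)) ^ p := by rw [hsplit]; ring_nf
      _ = _ := by rw [mul_rpow_of_nonneg _ _ hpq.nonneg, ofReal_rpow_of_nonneg hw hpq.nonneg]
  have hσQ_rpow : σQ ^ p / σQ = σQ ^ (p - 1) := by
    rw [rpow_sub _ _ hσ hσQ, rpow_one]
  calc (∫⁻ x in (tripleCube a l)ᶜ, (‖Tcube K σ a l x‖₊ : ℝ≥0∞) ^ p ∂ω) / σQ
      ≤ (∫⁻ x, (c * L * σQ) ^ p * ENNReal.ofReal (tailWeight a l x ^ p) ∂ω) / σQ := by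
        gcongr ?_ / _
        exact (setLIntegral_mono' (measurableSet_cubeSet _ _).compl hpointwise).trans
          (setLIntegral_le_lintegral _ _)
    _ = c ^ p * (L ^ p * (σQ ^ p / σQ) * ∫⁻ x, ENNReal.ofReal (tailWeight a l x ^ p) ∂ω) := by
        rw [lintegral_const_mul' _ _ hconst, mul_rpow_of_nonneg _ _ hpq.nonneg,
          mul_rpow_of_nonneg _ _ hpq.nonneg, div_eq_mul_inv, div_eq_mul_inv]
        ring
    _ ≤ c ^ p * tailedAp n p p' σ ω ^ p := by
        rw [hσQ_rpow]
        gcongr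
        exact inv_rpow_mul_measure_rpow_mul_le_tailedAp_rpow hpq σ ω a hl
    _ = _ := (mul_rpow_of_nonneg _ _ hpq.nonneg).symm

lemma lintegral_Tcube_div_le (hpq : p.HolderConjugate p') (hCCZ : 0 ≤ CCZ)
    (hK : ∀ x y, x ≠ y → |K x y| ≤ CCZ / dist x y ^ n)
    (σ ω : Measure (Fin n → ℝ)) [IsLocallyFiniteMeasure σ] (a : Fin n → ℝ) {l : ℝ} (hl : 0 < l) :
    (∫⁻ x, (‖Tcube K σ a l x‖₊ : ℝ≥0∞) ^ p ∂ω) / σ (cubeSet a l) ≤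
      (ENNReal.ofReal (2 ^ n * CCZ) * tailedAp n p p' σ ω) ^ p + tripleTesting K p σ ω ^ p := by
  by_cases hσ : σ (cubeSet a l) = 0
  · have hT : ∀ x, Tcube K σ a l x = 0 := fun x => by
      rw [Tcube, Measure.restrict_eq_zero.mpr hσ, integral_zero_measure]
    simp [hT, zero_rpow_of_pos hpq.pos]
  rw [← lintegral_add_compl _ (measurableSet_cubeSet _ _ : MeasurableSet (tripleCube a l)),
    ENNReal.add_div, add_comm]
  exact add_le_add (setLIntegral_compl_tripleCube_div_le hpq hCCZ hK σ ω a hl hσ)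
    (setLIntegral_tripleCube_div_le_tripleTesting_rpow hpq.pos σ ω a hl)

theorem fullTesting_le_tailedAp_add_tripleTesting (hpq : p.HolderConjugate p') (hCCZ : 0 ≤ CCZ)
    (hK : ∀ x y, x ≠ y → |K x y| ≤ CCZ / dist x y ^ n)
    (σ ω : Measure (Fin n → ℝ)) [IsLocallyFiniteMeasure σ] :
    fullTesting K p σ ω ≤
      ENNReal.ofReal (2 ^ n * CCZ) * tailedAp n p p' σ ω + tripleTesting K p σ ω :=
  calc fullTesting K p σ ω
      ≤ ((ENNReal.ofReal (2 ^ n * CCZ) * tailedAp n p p' σ ω) ^ p +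
          tripleTesting K p σ ω ^ p) ^ (1 / p) :=
        rpow_le_rpow (iSup_le fun a => iSup₂_le fun _ hl =>
          lintegral_Tcube_div_le hpq hCCZ hK σ ω a hl)
          hpq.one_div_nonneg
    _ ≤ _ := rpow_add_rpow_le_add _ _ hpq.lt.le

end Testing

theorem stmt4_general (n : ℕ) (p p' : ℝ) (hp : 1 < p) (hpp' : 1 / p + 1 / p' = 1)
    (CCZ : ℝ) (hCCZ : 0 ≤ CCZ) :
    ∃ C : ℝ≥0∞, 0 < C ∧ C < ∞ ∧
      ∀ (K : (Fin n → ℝ) → (Fin n → ℝ) → ℝ), Measurable (Function.uncurry K) →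
        (∀ x y, x ≠ y → |K x y| ≤ CCZ / dist x y ^ n) →
        ∀ (σ ω : Measure (Fin n → ℝ)) [IsLocallyFiniteMeasure σ] [IsLocallyFiniteMeasure ω],
          fullTesting K p σ ω ≤ C * (tailedAp n p p' σ ω + tripleTesting K p σ ω) := by
  have hpq : p.HolderConjugate p' := Real.holderConjugate_iff.mpr ⟨hp, by simpa using hpp'⟩
  set c := ENNReal.ofReal (2 ^ n * CCZ)
  refine ⟨1 + c, by positivity, add_lt_top.mpr ⟨one_lt_top, ofReal_lt_top⟩,
    fun K _ hK σ ω _ _ => ?_⟩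
  calc fullTesting K p σ ω ≤ c * tailedAp n p p' σ ω + tripleTesting K p σ ω :=
        fullTesting_le_tailedAp_add_tripleTesting hpq hCCZ hK σ ω
    _ ≤ (1 + c) * tailedAp n p p' σ ω + (1 + c) * tripleTesting K p σ ω := by
        gcongr
        · exact le_add_self
        · exact le_mul_of_one_le_left' le_self_add
    _ = _ := (mul_add _ _ _).symm

/-- Full testing is controlled by triple testing plus the two-tailed Muckenhoupt
characteristic, for Calderón–Zygmund kernels of size `|K(x,y)| ≤ C_CZ |x-y|^{-n}`. -/
theorem stmt4 (n : ℕ) (hn : 1 ≤ n) (p p' : ℝ) (hp : 1 < p) (hpp' : 1 / p + 1 / p' = 1)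
    (CCZ : ℝ) (hCCZ : 0 ≤ CCZ) :
    ∃ C : ℝ≥0∞, 0 < C ∧ C < ∞ ∧
      ∀ (K : (Fin n → ℝ) → (Fin n → ℝ) → ℝ), Measurable (Function.uncurry K) →
        (∀ x y, x ≠ y → |K x y| ≤ CCZ / dist x y ^ n) →
        ∀ (σ ω : Measure (Fin n → ℝ)) [IsLocallyFiniteMeasure σ] [IsLocallyFiniteMeasure ω],
          fullTesting K p σ ω ≤ C * (tailedAp n p p' σ ω + tripleTesting K p σ ω) :=
  stmt4_general n p p' hp hpp' CCZ hCCZ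
end

section
/- Let $\Delta > 0$, $B, M \geq 1$ integers, and let $g : \mathbb{R} \to \{-1, 0, 1\}$ be a $B$-block alternating step function with step size $\Delta$ supported on an interval $I$. If $b : I \to \mathbb{R}$ is a bounded function that is $M$-piecewise monotone on $I$, then $|\int_I b(x) g(x) \, dx| \leq C\, M B \Delta \|b\|_{\infty}$ for an absolute constant $C$. -/
open MeasureTheory Set intervalIntegral

/-
On a block `[a, a + m Δ)` the integral of `b g` equals `± ∫_a^{a+Δ} ∑_{j<m} (-1)^j b(x + j Δ) dx`.
For all but countably many `x` the samples `b(x + j Δ)` avoid the breakpoints of `b`, so they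
split into at most `M` consecutive monotone runs, and an alternating sum over a monotone run
with values in `[-K, K]` is at most `2K` in absolute value. Each block thus contributes at most
`2 M Δ ‖b‖_∞`, which gives the theorem with `C = 2`.
-/

/-- `g` is a `B`-block alternating step function with step size `Δ`, supported on `I`:
it is supported on `B` pairwise disjoint subintervals of `I`, on each of which it is a
step function with step size `Δ` alternating between the values `-1` and `+1`. -/
def IsBlockAlternating (g : ℝ → ℝ) (B : ℕ) (Δ : ℝ) (I : Set ℝ) : Prop :=
  ∃ (a : Fin B → ℝ) (m : Fin B → ℕ) (s : Fin B → ℤ),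
    (∀ i, Set.Ico (a i) (a i + m i * Δ) ⊆ I) ∧
    (∀ i, 1 ≤ m i) ∧
    (∀ i, s i = 1 ∨ s i = -1) ∧
    (Pairwise fun i i' =>
      Disjoint (Set.Ico (a i) (a i + m i * Δ)) (Set.Ico (a i') (a i' + m i' * Δ))) ∧
    (∀ i, ∀ x ∈ Set.Ico (a i) (a i + m i * Δ),
      g x = (s i : ℝ) * (-1 : ℝ) ^ ⌊(x - a i) / Δ⌋) ∧
    (∀ x, x ∉ ⋃ i, Set.Ico (a i) (a i + m i * Δ) → g x = 0)

/-- `b` is `M`-piecewise monotone on `[A, A']`: there is a partition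
`A = t_0 ≤ t_1 ≤ ⋯ ≤ t_M = A'` such that `b` is monotone and of one sign on
each open subinterval. -/
def PiecewiseMonotoneOn (b : ℝ → ℝ) (M : ℕ) (A A' : ℝ) : Prop :=
  ∃ t : ℕ → ℝ, t 0 = A ∧ t M = A' ∧ (∀ k < M, t k ≤ t (k + 1)) ∧
    ∀ k < M,
      (MonotoneOn b (Set.Ioo (t k) (t (k + 1))) ∨
        AntitoneOn b (Set.Ioo (t k) (t (k + 1)))) ∧
      ((∀ x ∈ Set.Ioo (t k) (t (k + 1)), 0 ≤ b x) ∨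
        (∀ x ∈ Set.Ioo (t k) (t (k + 1)), b x ≤ 0))

section AlternatingSums

variable {d : ℕ → ℝ} {K : ℝ}

theorem sum_Ico_alternating_mem_of_monotoneOn {p q : ℕ} (hpq : p < q)
    (hd : MonotoneOn d (Ico p q)) (hdK : ∀ j ∈ Ico p q, |d j| ≤ K) :
    d p - K ≤ (-1) ^ p * ∑ j ∈ Finset.Ico p q, (-1) ^ j * d j ∧
      (-1) ^ p * ∑ j ∈ Finset.Ico p q, (-1) ^ j * d j ≤ K := by
  obtain ⟨n, rfl⟩ : ∃ n, q = p + n + 1 := ⟨q - p - 1, by omega⟩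
  have hsq : ∀ i : ℕ, ((-1 : ℝ) ^ i) * (-1) ^ i = 1 := fun i => by rw [← mul_pow]; norm_num
  have hpK := abs_le.1 (hdK p ⟨le_rfl, by omega⟩)
  induction n generalizing p with
  | zero =>
    rw [Nat.Ico_succ_singleton, Finset.sum_singleton, ← mul_assoc, hsq, one_mul]
    constructor <;> linarith
  | succ n ih =>
    have hsub : Ico (p + 1) (p + 1 + n + 1) ⊆ Ico p (p + (n + 1) + 1) :=
      Ico_subset_Ico (by omega) (by omega)
    obtain ⟨ih₁, ih₂⟩ := ih (p := p + 1) (by omega) (hd.mono hsub) (fun j hj => hdK j (hsub hj))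
      (abs_le.1 (hdK (p + 1) ⟨by omega, by omega⟩))
    have hstep : d p ≤ d (p + 1) := hd ⟨le_rfl, by omega⟩ ⟨by omega, by omega⟩ (by omega)
    rw [Finset.sum_eq_sum_Ico_succ_bot (by omega), mul_add, ← mul_assoc, hsq, one_mul,
      show p + (n + 1) + 1 = p + 1 + n + 1 by omega]
    rw [pow_succ] at ih₁ ih₂
    constructor <;> linarith

theorem abs_sum_Ico_alternating_le_of_monotoneOn {p q : ℕ} (hK : 0 ≤ K)
    (hd : MonotoneOn d (Ico p q)) (hdK : ∀ j ∈ Ico p q, |d j| ≤ K) :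
    |∑ j ∈ Finset.Ico p q, (-1) ^ j * d j| ≤ 2 * K := by
  rcases le_or_gt q p with hqp | hpq
  · simp [Finset.Ico_eq_empty_of_le hqp, hK]
  obtain ⟨h₁, h₂⟩ := sum_Ico_alternating_mem_of_monotoneOn hpq hd hdK
  have hpK := abs_le.1 (hdK p ⟨le_rfl, hpq⟩)
  calc |∑ j ∈ Finset.Ico p q, (-1) ^ j * d j|
      = |(-1) ^ p * ∑ j ∈ Finset.Ico p q, (-1) ^ j * d j| := by
        rw [abs_mul, abs_neg_one_pow, one_mul]
    _ ≤ 2 * K := abs_le.2 ⟨by linarith, by linarith⟩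

theorem abs_sum_Ico_alternating_le_of_monotoneOn_or_antitoneOn {p q : ℕ} (hK : 0 ≤ K)
    (hd : MonotoneOn d (Ico p q) ∨ AntitoneOn d (Ico p q)) (hdK : ∀ j ∈ Ico p q, |d j| ≤ K) :
    |∑ j ∈ Finset.Ico p q, (-1) ^ j * d j| ≤ 2 * K := by
  rcases hd with hd | hd
  · exact abs_sum_Ico_alternating_le_of_monotoneOn hK hd hdK
  · simpa using abs_sum_Ico_alternating_le_of_monotoneOn (d := -d) hK hd.neg (by simpa using hdK)

theorem abs_sum_Ico_alternating_le_of_runs {N : ℕ} {p : ℕ → ℕ} (hK : 0 ≤ K)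
    (hp : MonotoneOn p (Iic N))
    (hd : ∀ k < N, MonotoneOn d (Ico (p k) (p (k + 1))) ∨ AntitoneOn d (Ico (p k) (p (k + 1))))
    (hdK : ∀ k < N, ∀ j ∈ Ico (p k) (p (k + 1)), |d j| ≤ K) :
    |∑ j ∈ Finset.Ico (p 0) (p N), (-1) ^ j * d j| ≤ 2 * N * K := by
  induction N with
  | zero => simp
  | succ N ih =>
    have hpN : p N ≤ p (N + 1) := hp (by simp) (by simp) (by omega)
    rw [← Finset.sum_Ico_consecutive _ (hp (by simp) (by simp) (by omega)) hpN]
    calc _ ≤ |∑ j ∈ Finset.Ico (p 0) (p N), (-1) ^ j * d j|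
          + |∑ j ∈ Finset.Ico (p N) (p (N + 1)), (-1) ^ j * d j| := abs_add_le _ _
      _ ≤ 2 * N * K + 2 * K := add_le_add
          (ih (hp.mono (Iic_subset_Iic.2 N.le_succ)) (fun k hk => hd k (by omega))
            (fun k hk => hdK k (by omega)))
          (abs_sum_Ico_alternating_le_of_monotoneOn_or_antitoneOn hK (hd N N.lt_succ_self)
            (hdK N N.lt_succ_self))
      _ = 2 * (N + 1 : ℕ) * K := by push_cast; ring

end AlternatingSums

theorem abs_sum_alternating_samples_le {b : ℝ → ℝ} {t : ℕ → ℝ} {M m : ℕ} {x Δ K : ℝ}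
    (hΔ : 0 < Δ) (hK : 0 ≤ K) (ht : ∀ k < M, t k ≤ t (k + 1))
    (hb : ∀ k < M, MonotoneOn b (Ioo (t k) (t (k + 1))) ∨ AntitoneOn b (Ioo (t k) (t (k + 1))))
    (hx : ∀ j < m, x + j * Δ ∈ Icc (t 0) (t M)) (hxt : ∀ k j : ℕ, x + j * Δ ≠ t k)
    (hbK : ∀ j < m, |b (x + j * Δ)| ≤ K) :
    |∑ j ∈ Finset.range m, (-1) ^ j * b (x + j * Δ)| ≤ 2 * M * K := by
  -- `p k` counts the samples `x + j * Δ`, `j < m`, lying below `t k`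
  set p : ℕ → ℕ := fun k => min m ⌈(t k - x) / Δ⌉₊
  have hp0 : p 0 = 0 := by
    rcases Nat.eq_zero_or_pos m with rfl | hm
    · simp [p]
    have hx0 : t 0 < x := by simpa using lt_of_le_of_ne (hx 0 hm).1 (hxt 0 0).symm
    simp only [p, min_zero,
      Nat.ceil_eq_zero.2 (div_nonpos_of_nonpos_of_nonneg (sub_nonpos.2 hx0.le) hΔ.le)]
  have hpM : p M = m := by
    rcases Nat.eq_zero_or_pos m with rfl | hm
    · simp [p]
    have hxM : x + (m - 1 : ℕ) * Δ < t M := lt_of_le_of_ne (hx _ (by omega)).2 (hxt _ _)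
    have := Nat.lt_ceil.2 ((lt_div_iff₀ hΔ).2 (by linarith) : ((m - 1 : ℕ) : ℝ) < (t M - x) / Δ)
    exact min_eq_left (by omega)
  have hrun : ∀ k < M, ∀ j ∈ Ico (p k) (p (k + 1)),
      j < m ∧ x + j * Δ ∈ Ioo (t k) (t (k + 1)) := by
    intro k hk j ⟨hj₁, hj₂⟩
    have hjm : j < m := hj₂.trans_le (min_le_left _ _)
    have hlo : ⌈(t k - x) / Δ⌉₊ ≤ j := (min_le_iff.1 hj₁).resolve_left (by omega)
    have hhi : j < ⌈(t (k + 1) - x) / Δ⌉₊ := hj₂.trans_le (min_le_right _ _)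
    rw [Nat.ceil_le, div_le_iff₀ hΔ] at hlo
    rw [Nat.lt_ceil, lt_div_iff₀ hΔ] at hhi
    exact ⟨hjm, lt_of_le_of_ne (by linarith) (hxt k j).symm, by linarith⟩
  have hp : MonotoneOn p (Iic M) := monotoneOn_of_le_add_one ordConnected_Iic
    fun k _ _ hk => min_le_min_left _ (Nat.ceil_mono
      (div_le_div_of_nonneg_right (by linarith [ht k (by simpa using hk)]) hΔ.le))
  have hsample : Monotone fun j : ℕ => x + j * Δ := fun i j hij =>
    add_le_add_right (mul_le_mul_of_nonneg_right (Nat.cast_le.2 hij) hΔ.le) x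
  have := abs_sum_Ico_alternating_le_of_runs (d := fun j => b (x + j * Δ)) hK hp
    (fun k hk => (hb k hk).imp
      (fun h => h.comp (hsample.monotoneOn _) fun j hj => (hrun k hk j hj).2)
      (fun h => h.comp_MonotoneOn (hsample.monotoneOn _) fun j hj => (hrun k hk j hj).2))
    (fun k hk j hj => hbK j (hrun k hk j hj).1)
  rwa [hp0, hpM, ← Finset.range_eq_Ico] at this

theorem integrableOn_Icc_of_piecewise_monotoneOn {b : ℝ → ℝ} {t : ℕ → ℝ} {M : ℕ} {K : ℝ}
    (hb : ∀ k < M, MonotoneOn b (Ioo (t k) (t (k + 1))) ∨ AntitoneOn b (Ioo (t k) (t (k + 1))))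
    (hbK : ∀ k < M, ∀ x ∈ Ioo (t k) (t (k + 1)), |b x| ≤ K) :
    IntegrableOn b (Icc (t 0) (t M)) := by
  induction M with
  | zero => simp
  | succ M ih =>
    have hpiece : IntegrableOn b (Icc (t M) (t (M + 1))) := by
      rw [integrableOn_Icc_iff_integrableOn_Ioo]
      have hmeas : AEMeasurable b (volume.restrict (Ioo (t M) (t (M + 1)))) :=
        (hb M M.lt_succ_self).elim (aemeasurable_restrict_of_monotoneOn measurableSet_Ioo)
          (aemeasurable_restrict_of_antitoneOn measurableSet_Ioo)
      exact .of_bound measure_Ioo_lt_top hmeas.aestronglyMeasurable K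
        ((ae_restrict_iff' measurableSet_Ioo).2 (.of_forall (hbK M M.lt_succ_self)))
    have hfirst := ih (fun k hk => hb k (by omega)) (fun k hk => hbK k (by omega))
    exact (hfirst.union hpiece).mono_set Icc_subset_Icc_union_Icc

theorem intervalIntegrable_mul_alternating {b g : ℝ → ℝ} {a L s Δ : ℝ} (haL : a ≤ L)
    (hb : IntervalIntegrable b volume a L)
    (hg : ∀ x ∈ Ico a L, g x = s * (-1) ^ ⌊(x - a) / Δ⌋) :
    IntervalIntegrable (fun x => b x * g x) volume a L := by
  rw [intervalIntegrable_iff_integrableOn_Ico_of_le haL] at hb ⊢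
  have hmeas : Measurable fun x : ℝ => s * (-1 : ℝ) ^ ⌊(x - a) / Δ⌋ := by fun_prop
  refine IntegrableOn.congr_fun (hb.mul_bdd hmeas.aestronglyMeasurable (c := |s|)
    (.of_forall fun x => by simp)) (fun x hx => by rw [hg x hx]) measurableSet_Ico

theorem integral_eq_integral_sum_comp_add_mul {f : ℝ → ℝ} {a Δ : ℝ} {m : ℕ} (hΔ : 0 ≤ Δ)
    (hf : IntervalIntegrable f volume a (a + m * Δ)) :
    ∫ x in a..a + m * Δ, f x = ∫ x in a..a + Δ, ∑ j ∈ Finset.range m, f (x + j * Δ) := by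
  have hstep : ∀ j < m, uIcc (a + j * Δ) (a + (j + 1 : ℕ) * Δ) ⊆ uIcc a (a + m * Δ) := by
    intro j hj
    have hjm : ((j + 1 : ℕ) : ℝ) ≤ m := by exact_mod_cast hj
    rw [uIcc_of_le (by push_cast; nlinarith), uIcc_of_le (by nlinarith)]
    exact Icc_subset_Icc (by nlinarith) (by nlinarith)
  have hint : ∀ j < m, IntervalIntegrable f volume (a + j * Δ) (a + (j + 1 : ℕ) * Δ) :=
    fun j hj => hf.mono_set (hstep j hj)
  have hsum := sum_integral_adjacent_intervals hint
  simp only [CharP.cast_eq_zero, zero_mul, add_zero] at hsum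
  rw [← hsum, intervalIntegral.integral_finsetSum]
  · refine Finset.sum_congr rfl fun j _ => ?_
    rw [integral_comp_add_right]
    congr 1; push_cast; ring
  · intro j hj
    have := (hint j (Finset.mem_range.1 hj)).comp_add_right (j * Δ)
    convert this using 2 <;> (push_cast; ring)

theorem integral_mul_alternating_eq {b g : ℝ → ℝ} {a s Δ : ℝ} {m : ℕ} (hΔ : 0 < Δ)
    (hb : IntervalIntegrable b volume a (a + m * Δ))
    (hg : ∀ x ∈ Ico a (a + m * Δ), g x = s * (-1) ^ ⌊(x - a) / Δ⌋) :
    ∫ x in a..a + m * Δ, b x * g x =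
      s * ∫ x in a..a + Δ, ∑ j ∈ Finset.range m, (-1) ^ j * b (x + j * Δ) := by
  have ham : a ≤ a + m * Δ := le_add_of_nonneg_right (mul_nonneg m.cast_nonneg hΔ.le)
  rw [integral_eq_integral_sum_comp_add_mul hΔ.le (intervalIntegrable_mul_alternating ham hb hg),
    ← intervalIntegral.integral_const_mul]
  refine integral_congr_ae ?_
  filter_upwards [volume.ae_ne (a + Δ)] with x hxΔ hx
  rw [uIoc_of_le (by linarith)] at hx
  have hxΔ' : x < a + Δ := lt_of_le_of_ne hx.2 hxΔ
  have hx' : (x - a) / Δ ∈ Ico 0 1 :=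
    ⟨div_nonneg (by linarith [hx.1]) hΔ.le, (div_lt_one hΔ).2 (by linarith)⟩
  rw [Finset.mul_sum]
  refine Finset.sum_congr rfl fun j hj => ?_
  have hjm : (j : ℝ) + 1 ≤ m := by exact_mod_cast Finset.mem_range.1 hj
  have hfloor : ⌊(x + j * Δ - a) / Δ⌋ = j := by
    rw [show (x + j * Δ - a) / Δ = (x - a) / Δ + j by field_simp; ring, Int.floor_add_natCast,
      Int.floor_eq_zero_iff.2 hx', zero_add]
  rw [hg _ ⟨by nlinarith [hx.1], by nlinarith⟩, hfloor, zpow_natCast]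
  ring

theorem abs_integral_mul_alternating_le {b g : ℝ → ℝ} {t : ℕ → ℝ} {M m : ℕ} {a s Δ K : ℝ}
    (hΔ : 0 < Δ) (hs : |s| = 1) (ht : ∀ k < M, t k ≤ t (k + 1))
    (hb : ∀ k < M, MonotoneOn b (Ioo (t k) (t (k + 1))) ∨ AntitoneOn b (Ioo (t k) (t (k + 1))))
    (ha : t 0 ≤ a) (ham : a + m * Δ ≤ t M) (hbK : ∀ x ∈ Icc a (a + m * Δ), |b x| ≤ K)
    (hbint : IntervalIntegrable b volume a (a + m * Δ))
    (hg : ∀ x ∈ Ico a (a + m * Δ), g x = s * (-1) ^ ⌊(x - a) / Δ⌋) :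
    |∫ x in a..a + m * Δ, b x * g x| ≤ 2 * M * Δ * K := by
  have hK : 0 ≤ K :=
    (abs_nonneg _).trans (hbK a ⟨le_rfl, le_add_of_nonneg_right (mul_nonneg m.cast_nonneg hΔ.le)⟩)
  -- the samples `x + j * Δ` hit a breakpoint `t k` only for countably many `x`
  have hnull : volume (range fun kj : ℕ × ℕ => t kj.1 - kj.2 * Δ) = 0 :=
    (countable_range _).measure_zero _
  rw [integral_mul_alternating_eq hΔ hbint hg, abs_mul, hs, one_mul]
  calc |∫ x in a..a + Δ, ∑ j ∈ Finset.range m, (-1) ^ j * b (x + j * Δ)|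
      ≤ ∫ _ in a..a + Δ, 2 * M * K := by
        rw [← Real.norm_eq_abs]
        refine norm_integral_le_of_norm_le (le_add_of_nonneg_right hΔ.le) ?_
          intervalIntegrable_const
        filter_upwards [measure_eq_zero_iff_ae_notMem.1 hnull] with x hxt hx
        have hsample : ∀ j < m, x + j * Δ ∈ Icc a (a + m * Δ) := fun j hj => by
          have hjm : (j : ℝ) + 1 ≤ m := by exact_mod_cast hj
          exact ⟨by nlinarith [hx.1], by nlinarith [hx.2]⟩
        exact abs_sum_alternating_samples_le hΔ hK ht hb
          (fun j hj => ⟨ha.trans (hsample j hj).1, (hsample j hj).2.trans ham⟩)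
          (fun k j h => hxt ⟨(k, j), by simp only; linarith⟩)
          (fun j hj => hbK _ (hsample j hj))
    _ = 2 * M * Δ * K := by simp; ring

theorem integral_eq_sum_integral_of_eq_zero_off_iUnion_Ico {ι : Type*} [Fintype ι] {f : ℝ → ℝ}
    {A A' : ℝ} {u v : ι → ℝ} (hAA' : A ≤ A') (huv : ∀ i, u i ≤ v i)
    (hsub : ∀ i, Ico (u i) (v i) ⊆ Icc A A')
    (hdisj : Pairwise (Function.onFun Disjoint fun i => Ico (u i) (v i)))
    (hf : ∀ x ∉ ⋃ i, Ico (u i) (v i), f x = 0)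
    (hint : ∀ i, IntervalIntegrable f volume (u i) (v i)) :
    ∫ x in A..A', f x = ∑ i, ∫ x in u i..v i, f x := by
  rw [integral_of_le hAA', ← integral_Icc_eq_integral_Ioc,
    setIntegral_eq_of_subset_of_forall_sdiff_eq_zero measurableSet_Icc (iUnion_subset hsub)
      fun x hx => hf x hx.2,
    integral_iUnion_fintype (fun i => measurableSet_Ico) hdisj
      fun i => (intervalIntegrable_iff_integrableOn_Ico_of_le (huv i)).1 (hint i)]
  refine Finset.sum_congr rfl fun i _ => ?_
  rw [integral_of_le (huv i), integral_Ico_eq_integral_Ioo, integral_Ioc_eq_integral_Ioo]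

/-- Alternating series test for block alternating functions: if `g` is a `B`-block
alternating step function with step size `Δ` supported on `[A, A')` and `b` is bounded
and `M`-piecewise monotone there, then `|∫ b g| ≤ C M B Δ ‖b‖_∞`. -/
theorem stmt9 :
    ∃ C : ℝ, 0 < C ∧
      ∀ (Δ : ℝ) (_ : 0 < Δ) (B M : ℕ) (_ : 1 ≤ B) (_ : 1 ≤ M)
        (A A' : ℝ) (_ : A ≤ A') (g b : ℝ → ℝ) (Cb : ℝ),
        IsBlockAlternating g B Δ (Set.Ico A A') →
        PiecewiseMonotoneOn b M A A' →
        (∀ x ∈ Set.Icc A A', |b x| ≤ Cb) →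
        |∫ x in A..A', b x * g x| ≤ C * M * B * Δ * Cb := by
  refine ⟨2, two_pos, ?_⟩
  intro Δ hΔ B M _ _ A A' hAA' g b Cb ⟨a, m, s, hsub, hm, hs, hdisj, hg, hg0⟩ ⟨t, ht0, htM, ht, hb⟩
    hbK
  have hpiece := fun k hk => (hb k hk).1
  have htmono : MonotoneOn t (Iic M) := monotoneOn_of_le_add_one ordConnected_Iic
    fun k _ _ hk => ht k hk
  have hbint : IntegrableOn b (Icc A A') := by
    rw [← ht0, ← htM]
    refine integrableOn_Icc_of_piecewise_monotoneOn hpiece fun k hk x hx => hbK x ?_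
    exact ⟨ht0 ▸ (htmono (by simp) (by simp; omega) (by omega)).trans hx.1.le,
      htM ▸ hx.2.le.trans (htmono (by simp; omega) (by simp) (by omega))⟩
  have hlen : ∀ i, a i < a i + m i * Δ := fun i =>
    lt_add_of_pos_right _ (mul_pos (by exact_mod_cast hm i) hΔ)
  have hblock : ∀ i, A ≤ a i ∧ a i + m i * Δ ≤ A' := fun i =>
    (Ico_subset_Ico_iff (hlen i)).1 (hsub i)
  have hbint' : ∀ i, IntervalIntegrable b volume (a i) (a i + m i * Δ) := fun i =>
    (intervalIntegrable_iff_integrableOn_Icc_of_le (hlen i).le).2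
      (hbint.mono_set (Icc_subset_Icc (hblock i).1 (hblock i).2))
  rw [integral_eq_sum_integral_of_eq_zero_off_iUnion_Ico hAA' (fun i => (hlen i).le)
    (fun i => (hsub i).trans Ico_subset_Icc_self) hdisj (fun x hx => by rw [hg0 x hx, mul_zero])
    (fun i => intervalIntegrable_mul_alternating (hlen i).le (hbint' i) (hg i))]
  calc _ ≤ ∑ i, |∫ x in a i..a i + m i * Δ, b x * g x| := Finset.abs_sum_le_sum_abs _ _
    _ ≤ ∑ _i : Fin B, 2 * M * Δ * Cb := Finset.sum_le_sum fun i _ =>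
        abs_integral_mul_alternating_le hΔ (by rcases hs i with h | h <;> simp [h]) ht hpiece
          (ht0 ▸ (hblock i).1) (htM ▸ (hblock i).2)
          (fun x hx => hbK x ⟨(hblock i).1.trans hx.1, hx.2.trans (hblock i).2⟩) (hbint' i) (hg i)
    _ = 2 * M * B * Δ * Cb := by simp; ring
end

section
/- Let $q \in (1, \infty)$. For $x = (x_1, x_2) \in \mathbb{R}^2$ define $G(x) = \int_{-1}^{1} \frac{dy_1}{[(x_1 - y_1)^2 + (1 - x_2)^2]^{1/2}}$. Then for each $0 < \delta < 1/2$, the function $x \mapsto \mathbf{1}_{H_\delta}(x) G(x)$ tends to $0$ in $L^q([-r, r]^2)$ as $\delta \to 0$, where $H_\delta = \{ x \in [-r, r]^2 : \mathrm{dist}(x_j, \{-1, 1\}) < \delta \text{ for some } j \in \{1, 2\} \}$ and $r > 1$ is fixed. In particular $G \in L^q([-r,r]^2)$, with at most a logarithmic singularity $G(x) \lesssim 1 + \log \frac{C}{|1 - x_2|}$. -/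
/-!
For `x₂ ≠ 1` the integral defining `G` is elementary,
`G x = arsinh ((x₁ + 1) / |1 - x₂|) - arsinh ((x₁ - 1) / |1 - x₂|)`, and on `[-r, r]²` this is at
most `2 log (3 (r + 1) / |1 - x₂|)`. Since `log (C / a) ^ q ≲ a ^ (-1/2)` and `|1 - x₂| ^ (-1/2)`
is integrable, `G ^ q` is integrable on the square. As `δ ↓ 0` the halos shrink to the four
lines `xⱼ = ±1`, a null set, so their measure tends to `0`, and absolute continuity of the
integral of `G ^ q` gives the limit.
-/

open MeasureTheory Set Filter ENNReal

/-- `G(x) = ∫_{-1}^1 dy₁ / √((x₁-y₁)² + (1-x₂)²)`. -/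
noncomputable def G12 (x : ℝ × ℝ) : ℝ :=
  ∫ y1 in (-1 : ℝ)..1, 1 / Real.sqrt ((x.1 - y1) ^ 2 + (1 - x.2) ^ 2)

/-- The square `[-r,r]²`. -/
def bigSquare (r : ℝ) : Set (ℝ × ℝ) := Set.Icc (-r) r ×ˢ Set.Icc (-r) r

/-- The extended halo: points of `[-r,r]²` some coordinate of which is within `δ`
of `{-1, 1}`. -/
def halo (r δ : ℝ) : Set (ℝ × ℝ) :=
  {x ∈ bigSquare r |
    |x.1 - 1| < δ ∨ |x.1 + 1| < δ ∨ |x.2 - 1| < δ ∨ |x.2 + 1| < δ}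

open Real Topology

theorem hasDerivAt_arsinh_div {c : ℝ} (hc : 0 < c) (y : ℝ) :
    HasDerivAt (fun y => arsinh (y / c)) (1 / √(y ^ 2 + c ^ 2)) y := by
  refine ((hasDerivAt_arsinh (y / c)).comp y ((hasDerivAt_id y).div_const c)).congr_deriv ?_
  have hsqrt : √(1 + (y / c) ^ 2) = √(y ^ 2 + c ^ 2) / c := by
    rw [show 1 + (y / c) ^ 2 = (y ^ 2 + c ^ 2) / c ^ 2 by field_simp; ring,
      sqrt_div' _ (sq_nonneg c), sqrt_sq hc.le]
  have : 0 < √(y ^ 2 + c ^ 2) := sqrt_pos.2 (by positivity)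
  rw [hsqrt]
  field_simp

theorem integral_one_div_sqrt_sq_add_sq {c : ℝ} (hc : 0 < c) (a b : ℝ) :
    ∫ y in a..b, 1 / √(y ^ 2 + c ^ 2) = arsinh (b / c) - arsinh (a / c) := by
  refine intervalIntegral.integral_eq_sub_of_hasDerivAt
    (fun y _ => hasDerivAt_arsinh_div hc y) (Continuous.intervalIntegrable ?_ a b)
  refine continuous_const.div (by fun_prop) fun y => (sqrt_pos.2 ?_).ne'
  positivity

theorem G12_eq_arsinh_sub {x : ℝ × ℝ} (h : x.2 ≠ 1) :
    G12 x = arsinh ((x.1 + 1) / |1 - x.2|) - arsinh ((x.1 - 1) / |1 - x.2|) := by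
  have ha : 0 < |1 - x.2| := abs_pos.2 (sub_ne_zero.2 h.symm)
  simp_rw [G12, ← sq_abs (1 - x.2)]
  rw [intervalIntegral.integral_comp_sub_left (fun y => 1 / √(y ^ 2 + |1 - x.2| ^ 2)),
    integral_one_div_sqrt_sq_add_sq ha, sub_neg_eq_add]

theorem G12_nonneg (x : ℝ × ℝ) : 0 ≤ G12 x :=
  intervalIntegral.integral_nonneg (by norm_num) fun _ _ => by positivity

theorem arsinh_le_log_three_mul {t : ℝ} (ht : 1 ≤ t) : arsinh t ≤ Real.log (3 * t) := by
  have hsqrt : √(1 + t ^ 2) ≤ 2 * t := by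
    rw [sqrt_le_left (by linarith)]; nlinarith
  exact Real.log_le_log (by positivity) (by linarith)

theorem measurableSet_bigSquare (r : ℝ) : MeasurableSet (bigSquare r) :=
  measurableSet_Icc.prod measurableSet_Icc

theorem abs_one_sub_snd_le {r : ℝ} {x : ℝ × ℝ} (hx : x ∈ bigSquare r) :
    |1 - x.2| ≤ r + 1 :=
  abs_le.2 ⟨by linarith [hx.2.2], by linarith [hx.2.1]⟩

theorem G12_le_two_mul_log {r : ℝ} {x : ℝ × ℝ} (hx : x ∈ bigSquare r) (h : x.2 ≠ 1) :
    G12 x ≤ 2 * Real.log (3 * (r + 1) / |1 - x.2|) := by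
  have ha : 0 < |1 - x.2| := abs_pos.2 (sub_ne_zero.2 h.symm)
  have hT : 1 ≤ (r + 1) / |1 - x.2| := (one_le_div ha).2 (abs_one_sub_snd_le hx)
  obtain ⟨⟨hx₁, hx₁'⟩, -⟩ := hx
  have hplus : arsinh ((x.1 + 1) / |1 - x.2|) ≤ arsinh ((r + 1) / |1 - x.2|) :=
    arsinh_le_arsinh.2 (by gcongr)
  have hminus : -arsinh ((x.1 - 1) / |1 - x.2|) ≤ arsinh ((r + 1) / |1 - x.2|) := by
    rw [← arsinh_neg, arsinh_le_arsinh, ← neg_div]; gcongr; linarith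
  rw [G12_eq_arsinh_sub h, mul_div_assoc]
  linarith [arsinh_le_log_three_mul hT]

theorem exists_log_div_rpow_le {C p q : ℝ} (hp : 0 < p) (hq : 0 < q) :
    ∃ K, ∀ a, 0 < a → a ≤ C → Real.log (C / a) ^ q ≤ K * a ^ (-p) := by
  set ε := p / q
  have hε : 0 < ε := div_pos hp hq
  refine ⟨(C ^ ε / ε) ^ q, fun a ha haC => ?_⟩
  have hC : 0 < C := ha.trans_le haC
  have hlog : Real.log (C / a) ≤ C ^ ε / ε * a ^ (-ε) := by
    calc Real.log (C / a) ≤ (C / a) ^ ε / ε := Real.log_le_rpow_div (by positivity) hε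
      _ = C ^ ε / ε * a ^ (-ε) := by
        rw [div_rpow hC.le ha.le, rpow_neg ha.le]; ring
  calc Real.log (C / a) ^ q ≤ (C ^ ε / ε * a ^ (-ε)) ^ q :=
        rpow_le_rpow (Real.log_nonneg ((one_le_div ha).2 haC)) hlog hq.le
    _ = (C ^ ε / ε) ^ q * a ^ (-p) := by
        rw [mul_rpow (by positivity) (by positivity), ← rpow_mul ha.le,
          neg_mul, div_mul_cancel₀ p hq.ne']

theorem intervalIntegrable_abs_sub_rpow {s : ℝ} (hs : -1 < s) (c a b : ℝ) :
    IntervalIntegrable (fun y => |c - y| ^ s) volume a b := by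
  have hloc : LocallyIntegrable (fun u : ℝ => |u| ^ s) volume :=
    locallyIntegrable_of_norm_le_rpow (α := -s) (C := 1) (by simp) (by simp; linarith)
      (ae_of_all _ fun u => by simp [abs_of_nonneg (rpow_nonneg (abs_nonneg u) s)])
      (measurable_id.abs.pow_const s).aestronglyMeasurable
  simpa using ((hloc.integrableOn_isCompact isCompact_uIcc).intervalIntegrable
    (a := c - a) (b := c - b)).comp_sub_left c

theorem integrableOn_bigSquare_comp_snd {r : ℝ} {f : ℝ → ℝ}
    (hf : IntegrableOn f (Icc (-r) r)) :
    IntegrableOn (fun x : ℝ × ℝ => f x.2) (bigSquare r) := by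
  have : IsFiniteMeasure (volume.restrict (Icc (-r) r)) := by
    rw [isFiniteMeasure_restrict]; exact measure_Icc_lt_top.ne
  rw [IntegrableOn, bigSquare, Measure.volume_eq_prod, ← Measure.prod_restrict]
  exact hf.comp_snd _

theorem volume_preimage_snd_null {s : Set ℝ} (hs : volume s = 0) :
    (volume : Measure (ℝ × ℝ)) (Prod.snd ⁻¹' s) = 0 := by
  rw [← univ_prod, Measure.volume_eq_prod, Measure.prod_prod, hs, mul_zero]

theorem volume_preimage_fst_null {s : Set ℝ} (hs : volume s = 0) :
    (volume : Measure (ℝ × ℝ)) (Prod.fst ⁻¹' s) = 0 := by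
  rw [← prod_univ, Measure.volume_eq_prod, Measure.prod_prod, hs, zero_mul]

theorem exists_G12_rpow_le (r : ℝ) {q : ℝ} (hq : 0 < q) :
    ∃ K, ∀ x ∈ bigSquare r, x.2 ≠ 1 → G12 x ^ q ≤ K * |1 - x.2| ^ (-(1 / 2) : ℝ) := by
  obtain ⟨K, hK⟩ :=
    exists_log_div_rpow_le (C := 3 * (r + 1)) (by norm_num : (0 : ℝ) < 1 / 2) hq
  refine ⟨2 ^ q * K, fun x hx h => ?_⟩
  have ha : 0 < |1 - x.2| := abs_pos.2 (sub_ne_zero.2 h.symm)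
  have haC : |1 - x.2| ≤ 3 * (r + 1) := by linarith [abs_one_sub_snd_le hx]
  calc G12 x ^ q ≤ (2 * Real.log (3 * (r + 1) / |1 - x.2|)) ^ q :=
        rpow_le_rpow (G12_nonneg x) (G12_le_two_mul_log hx h) hq.le
    _ = 2 ^ q * Real.log (3 * (r + 1) / |1 - x.2|) ^ q :=
        mul_rpow zero_le_two (Real.log_nonneg ((one_le_div ha).2 haC))
    _ ≤ 2 ^ q * K * |1 - x.2| ^ (-(1 / 2) : ℝ) := by
        rw [mul_assoc]; gcongr; exact hK _ ha haC

theorem lintegral_ofReal_G12_rpow_lt_top (r : ℝ) {q : ℝ} (hq : 0 < q) :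
    ∫⁻ x in bigSquare r, ENNReal.ofReal (G12 x) ^ q < ∞ := by
  obtain ⟨K, hK⟩ := exists_G12_rpow_le r hq
  have hae : ∀ᵐ x ∂volume.restrict (bigSquare r), x ∈ bigSquare r ∧ x.2 ≠ 1 :=
    (ae_restrict_mem (measurableSet_bigSquare r)).and <| ae_restrict_of_ae <|
      measure_eq_zero_iff_ae_notMem.1 (volume_preimage_snd_null (measure_singleton 1))
  have hint : IntegrableOn (fun x : ℝ × ℝ => K * |1 - x.2| ^ (-(1 / 2) : ℝ)) (bigSquare r) :=
    integrableOn_bigSquare_comp_snd <| ((intervalIntegrable_iff' enorm_ne_top).1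
      (intervalIntegrable_abs_sub_rpow (s := -(1 / 2)) (by norm_num) 1 (-r) r)).mono_set
        Icc_subset_uIcc |>.const_mul K
  calc ∫⁻ x in bigSquare r, ENNReal.ofReal (G12 x) ^ q
      ≤ ∫⁻ x in bigSquare r, ENNReal.ofReal (K * |1 - x.2| ^ (-(1 / 2) : ℝ)) := by
        refine lintegral_mono_ae (hae.mono fun x ⟨hx, h⟩ => ?_)
        rw [ENNReal.ofReal_rpow_of_nonneg (G12_nonneg x) hq.le]
        exact ENNReal.ofReal_le_ofReal (hK x hx h)
    _ < ∞ := hint.lintegral_lt_top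

theorem measurableSet_halo (r δ : ℝ) : MeasurableSet (halo r δ) :=
  (measurableSet_bigSquare r).inter (measurableSet_setOfPred.2 (by fun_prop))

theorem halo_mono (r : ℝ) : Monotone (halo r) := by
  rintro δ δ' h x ⟨hx, hd⟩
  exact ⟨hx, by rcases hd with hd | hd | hd | hd <;> simp [hd.trans_le h]⟩

theorem biInter_halo_subset (r : ℝ) :
    ⋂ δ > (0 : ℝ), halo r δ ⊆ Prod.fst ⁻¹' {1, -1} ∪ Prod.snd ⁻¹' {1, -1} := by
  intro x hx
  by_contra hlines
  simp only [mem_union, mem_preimage, mem_insert_iff, mem_singleton_iff, not_or] at hlines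
  obtain ⟨⟨h₁, h₁'⟩, h₂, h₂'⟩ := hlines
  set δ := min (min |x.1 - 1| |x.1 + 1|) (min |x.2 - 1| |x.2 + 1|)
  have hδ : 0 < δ := by
    simp only [δ, lt_min_iff, abs_pos, sub_ne_zero, ne_eq, add_eq_zero_iff_eq_neg]
    exact ⟨⟨h₁, h₁'⟩, h₂, h₂'⟩
  obtain ⟨-, hd⟩ := mem_iInter₂.1 hx δ hδ
  rcases hd with hd | hd | hd | hd <;> simp [δ] at hd

theorem tendsto_volume_halo (r : ℝ) :
    Tendsto (fun δ => volume.restrict (bigSquare r) (halo r δ)) (𝓝[>] 0) (𝓝 0) := by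
  have hlines : volume.restrict (bigSquare r) (⋂ δ > (0 : ℝ), halo r δ) = 0 := by
    refine Measure.restrict_le_self.absolutelyContinuous (measure_mono_null
      (biInter_halo_subset r) (measure_union_null ?_ ?_))
    · exact volume_preimage_fst_null ((toFinite _).measure_zero _)
    · exact volume_preimage_snd_null ((toFinite _).measure_zero _)
  rw [← hlines]
  refine tendsto_measure_biInter_gt (fun δ _ => (measurableSet_halo r δ).nullMeasurableSet)
    (fun _ _ _ h => halo_mono r h) ⟨1, one_pos, ?_⟩
  exact (measure_mono (subset_univ _)).trans_lt (by
    rw [Measure.restrict_apply_univ]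
    exact (isCompact_Icc.prod isCompact_Icc).measure_lt_top) |>.ne

/-- The halo part of `G` tends to `0` in `L^q([-r,r]²)` as `δ → 0`; moreover
`G ∈ L^q([-r,r]²)`, with at most a logarithmic singularity. -/
theorem stmt12 (q r : ℝ) (hq : 1 < q) (hr : 1 < r) :
    Tendsto
      (fun δ : ℝ => ∫⁻ x in bigSquare r,
        (halo r δ).indicator (fun x => ENNReal.ofReal (G12 x)) x ^ q ∂volume)
      (nhdsWithin 0 (Set.Ioi 0)) (nhds 0) ∧
    (∫⁻ x in bigSquare r, ENNReal.ofReal (G12 x) ^ q ∂volume) < ∞ ∧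
    ∃ C : ℝ, 0 < C ∧ ∀ x ∈ bigSquare r, x.2 ≠ 1 →
      G12 x ≤ C * (1 + Real.log (C / |1 - x.2|)) := by
  have hq₀ : 0 < q := zero_lt_one.trans hq
  have hfin := lintegral_ofReal_G12_rpow_lt_top r hq₀
  refine ⟨?_, hfin, 3 * (r + 1), by linarith, fun x hx h => ?_⟩
  · have hpow (δ : ℝ) :
        (fun x => (halo r δ).indicator (fun x => ENNReal.ofReal (G12 x)) x ^ q) =
          (halo r δ).indicator (fun x => ENNReal.ofReal (G12 x) ^ q) :=
      (indicator_comp_of_zero (g := (· ^ q)) (ENNReal.zero_rpow_of_pos hq₀)).symm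
    simp_rw [hpow, lintegral_indicator (measurableSet_halo r _)]
    exact tendsto_setLIntegral_zero hfin.ne (tendsto_volume_halo r)
  · have ha : 0 < |1 - x.2| := abs_pos.2 (sub_ne_zero.2 h.symm)
    have hlog : 0 ≤ Real.log (3 * (r + 1) / |1 - x.2|) :=
      Real.log_nonneg ((one_le_div ha).2 (by linarith [abs_one_sub_snd_le hx]))
    nlinarith [G12_le_two_mul_log hx h]
end
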